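/- Let C = k[z,w]/(z²+z³+w²) and let C' = k[t] be a C-module via z ↦ −t²−1, w ↦ −t³−t. The map C' → End_C(C') sending u ∈ k[t] to the multiplication-by-u endomorphism is a ring isomorphism; in particular every C-linear endomorphism of C' is multiplication by a unique polynomial in k[t]. -/

import Mathlib

set_option synthInstance.maxHeartbeats 1000000
set_option maxHeartbeats 1000000

noncomputable section

/-- The polynomial `z² + z³ + w²` in `k[z,w]`, where `z = X 0` and `w = X 1`. -/
abbrev pC (k : Type*) [Field k] : MvPolynomial (Fin 2) k :=
  MvPolynomial.X 0 ^ 2 + MvPolynomial.X 0 ^ 3 + MvPolynomial.X 1 ^ 2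

/-- `C = k[z,w]/(z²+z³+w²)`, the coordinate ring of a nodal affine cubic. -/
abbrev C (k : Type*) [Field k] : Type _ :=
  MvPolynomial (Fin 2) k ⧸ Ideal.span {pC k}

/-- The `k`-algebra map `k[z,w] → k[t]` with `z ↦ −t²−1`, `w ↦ −t³−t`. -/
def fC (k : Type*) [Field k] : MvPolynomial (Fin 2) k →ₐ[k] Polynomial k :=
  MvPolynomial.aeval ![-(Polynomial.X ^ 2) - 1, -(Polynomial.X ^ 3) - Polynomial.X]

lemma fC_pC (k : Type*) [Field k] : fC k (pC k) = 0 := by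
  simp [fC, pC]
  ring

/-- The induced `k`-algebra map `α : C → k[t]` (normalization of the nodal cubic). -/
def αC (k : Type*) [Field k] : C k →ₐ[k] Polynomial k :=
  Ideal.Quotient.liftₐ (Ideal.span {pC k}) (fC k) (by
    intro a ha
    have h : Ideal.span {pC k} ≤ RingHom.ker (fC k).toRingHom := by
      rw [Ideal.span_le, Set.singleton_subset_iff, SetLike.mem_coe, RingHom.mem_ker]
      exact fC_pC k
    exact RingHom.mem_ker.mp (h ha))

/-- `C' = k[t]` as a `C`-module via `α`. -/
instance algC (k : Type*) [Field k] : Algebra (C k) (Polynomial k) :=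
  (αC k).toRingHom.toAlgebra

/-- The `C`-linear map `C² → C' = k[t]`, `(a,b) ↦ α(a) − α(b)·t`. -/
def gC (k : Type*) [Field k] : (C k × C k) →ₗ[C k] Polynomial k :=
  (Algebra.linearMap (C k) (Polynomial k)).comp (LinearMap.fst _ _ _) -
    (LinearMap.mulRight (C k) (Polynomial.X : Polynomial k)).comp
      ((Algebra.linearMap (C k) (Polynomial k)).comp (LinearMap.snd _ _ _))

open scoped Polynomial
open Polynomial (X monic_X_pow_add_C)

section MulCommutant

variable {A B : Type*} [CommRing A] [CommRing B] [Algebra A B]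

def mulCommutant (f : Module.End A B) : Subalgebra A B :=
  (Subalgebra.centralizer A {f}).comap (Algebra.lmul A B)

theorem mem_mulCommutant_iff {f : Module.End A B} {x : B} :
    x ∈ mulCommutant f ↔ ∀ q, f (x * q) = x * f q := by
  simp only [mulCommutant, Subalgebra.mem_comap, Subalgebra.mem_centralizer_iff,
    Set.mem_singleton_iff, forall_eq]
  exact LinearMap.ext_iff

theorem mem_mulCommutant_of_mul_eq_algebraMap (f : Module.End A B) {x : B} {s a : A}
    (hs : IsLeftRegular (algebraMap A B s)) (ha : algebraMap A B s * x = algebraMap A B a) :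
    x ∈ mulCommutant f := by
  refine mem_mulCommutant_iff.2 fun q => hs ?_
  calc algebraMap A B s * f (x * q) = f (algebraMap A B s * x * q) := by
        rw [mul_assoc, ← Algebra.smul_def, ← Algebra.smul_def, map_smul]
    _ = algebraMap A B s * (x * f q) := by
        rw [ha, ← Algebra.smul_def a q, map_smul, Algebra.smul_def, ← ha, mul_assoc]

theorem eq_lmul_of_mulCommutant_eq_top {f : Module.End A B} (h : mulCommutant f = ⊤) :
    f = Algebra.lmul A B (f 1) := by
  ext p
  have hp : p ∈ mulCommutant f := h ▸ Algebra.mem_top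
  simpa [mul_comm] using mem_mulCommutant_iff.1 hp 1

end MulCommutant

section NodalCubic

variable (k : Type*) [Field k]

theorem algebraMap_C_neg_z :
    algebraMap (C k) k[X] (-Ideal.Quotient.mk _ (MvPolynomial.X 0)) = X ^ 2 + 1 := by
  rw [map_neg]
  change -fC k (MvPolynomial.X 0) = _
  simp only [fC, MvPolynomial.aeval_X, Matrix.cons_val_zero]
  ring

theorem algebraMap_C_neg_w :
    algebraMap (C k) k[X] (-Ideal.Quotient.mk _ (MvPolynomial.X 1)) = (X ^ 2 + 1) * X := by
  rw [map_neg]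
  change -fC k (MvPolynomial.X 1) = _
  simp only [fC, MvPolynomial.aeval_X, Matrix.cons_val_one, Matrix.cons_val_fin_one]
  ring

theorem algebraMap_C_algebraMap (c : k) :
    algebraMap (C k) k[X] (algebraMap k (C k) c) = Polynomial.C c :=
  (αC k).commutes c

/-- `t = w / z` lies in the fraction field of `C`, so `k[t]` commutes with every `C`-linear
endomorphism of `k[t]`. -/
theorem mulCommutant_eq_top (f : Module.End (C k) k[X]) : mulCommutant f = ⊤ := by
  have hX : X ∈ mulCommutant f := by
    refine mem_mulCommutant_of_mul_eq_algebraMap f (s := -Ideal.Quotient.mk _ (MvPolynomial.X 0))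
      (a := -Ideal.Quotient.mk _ (MvPolynomial.X 1)) ?_
      (by rw [algebraMap_C_neg_z, algebraMap_C_neg_w])
    rw [algebraMap_C_neg_z]
    exact (IsRegular.of_ne_zero (monic_X_pow_add_C (1 : k) two_ne_zero).ne_zero).left
  have hC (c : k) : Polynomial.C c ∈ mulCommutant f :=
    algebraMap_C_algebraMap k c ▸ Subalgebra.algebraMap_mem _ _
  rw [eq_top_iff]
  rintro p -
  induction p using Polynomial.induction_on with
  | C c => exact hC c
  | add p q hp hq => exact add_mem hp hq
  | monomial n c _ => exact mul_mem (hC c) (pow_mem hX _)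

end NodalCubic

theorem stmt9_general (k : Type*) [Field k] :
    (∀ u v : Polynomial k, Algebra.lmul (C k) (Polynomial k) u v = u * v) ∧
    Function.Bijective (Algebra.lmul (C k) (Polynomial k)) :=
  ⟨fun _ _ => rfl, Algebra.lmul_injective,
    fun f => ⟨f 1, (eq_lmul_of_mulCommutant_eq_top (mulCommutant_eq_top k f)).symm⟩⟩

/-- The map `C' → End_C(C')` sending `u ∈ k[t]` to the multiplication-by-`u` endomorphism
is a ring isomorphism: it is the (ring) homomorphism `Algebra.lmul`, which sends `u` to
multiplication by `u`, and it is bijective. -/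
theorem stmt9 (k : Type*) [Field k] [IsAlgClosed k] [CharZero k] :
    (∀ u v : Polynomial k, Algebra.lmul (C k) (Polynomial k) u v = u * v) ∧
    Function.Bijective (Algebra.lmul (C k) (Polynomial k)) :=
  stmt9_general k

end
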